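/- Monotonicity of the specification-building loop preserves satisfiability under the disjointness hypothesis: if L is a satisfiable set of PLTL formulas and S is a satisfiable set of PLTL formulas whose atoms are disjoint from the atoms of L, then L ∪ S is satisfiable; consequently, by induction, the union of any finite family of pairwise atom-disjoint satisfiable formula sets is satisfiable. -/
import Mathlib


inductive PLTL (α : Type) : Type
  | atom : α → PLTL α
  | neg  : PLTL α → PLTL α
  | conj : PLTL α → PLTL α → PLTL α
  | disj : PLTL α → PLTL α → PLTL α
  | imp  : PLTL α → PLTL α → PLTL α
  | ev   : PLTL α → PLTL α
  | alw  : PLTL α → PLTL α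

def PLTL.Sat {α : Type} (σ : ℕ → α → Bool) : ℕ → PLTL α → Prop
  | i, atom a   => σ i a = true
  | i, neg φ    => ¬ PLTL.Sat σ i φ
  | i, conj φ ψ => PLTL.Sat σ i φ ∧ PLTL.Sat σ i ψ
  | i, disj φ ψ => PLTL.Sat σ i φ ∨ PLTL.Sat σ i ψ
  | i, imp φ ψ  => PLTL.Sat σ i φ → PLTL.Sat σ i ψ
  | i, ev φ     => ∃ j, i ≤ j ∧ PLTL.Sat σ j φ
  | i, alw φ    => ∀ j, i ≤ j → PLTL.Sat σ j φ

def PLTL.atoms {α : Type} : PLTL α → Set α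
  | atom a   => {a}
  | neg φ    => φ.atoms
  | conj φ ψ => φ.atoms ∪ ψ.atoms
  | disj φ ψ => φ.atoms ∪ ψ.atoms
  | imp φ ψ  => φ.atoms ∪ ψ.atoms
  | ev φ     => φ.atoms
  | alw φ    => φ.atoms

def PLTL.Satisfiable {α : Type} (S : Set (PLTL α)) : Prop :=
  ∃ σ : ℕ → α → Bool, ∀ φ ∈ S, PLTL.Sat σ 0 φ

def PLTL.setAtoms {α : Type} (S : Set (PLTL α)) : Set α :=
  ⋃ φ ∈ S, PLTL.atoms φ


lemma PLTL.sat_congr {α : Type} (φ : PLTL α) (σ τ : ℕ → α → Bool)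
    (h : ∀ a ∈ φ.atoms, ∀ i, σ i a = τ i a) :
    ∀ i, PLTL.Sat σ i φ ↔ PLTL.Sat τ i φ := by
  induction φ with
  | atom a => intro i; simp [PLTL.Sat, h a (by simp [PLTL.atoms]) i]
  | neg φ ih =>
    intro i; simp only [PLTL.Sat]
    exact not_congr (ih (fun a ha => h a ha) i)
  | conj φ ψ ihφ ihψ =>
    intro i; simp only [PLTL.Sat]
    exact and_congr (ihφ (fun a ha => h a (Or.inl ha)) i) (ihψ (fun a ha => h a (Or.inr ha)) i)
  | disj φ ψ ihφ ihψ =>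
    intro i; simp only [PLTL.Sat]
    exact or_congr (ihφ (fun a ha => h a (Or.inl ha)) i) (ihψ (fun a ha => h a (Or.inr ha)) i)
  | imp φ ψ ihφ ihψ =>
    intro i; simp only [PLTL.Sat]
    exact imp_congr (ihφ (fun a ha => h a (Or.inl ha)) i) (ihψ (fun a ha => h a (Or.inr ha)) i)
  | ev φ ih =>
    intro i; simp only [PLTL.Sat]
    exact exists_congr fun j => and_congr_right fun _ => ih h j
  | alw φ ih =>
    intro i; simp only [PLTL.Sat]
    exact forall_congr' fun j => imp_congr_right fun _ => ih h j

/-- Merging preserves satisfiability: a satisfiable set L and a satisfiable set S with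
atoms disjoint from those of L have a satisfiable union; consequently the union of any
finite family of pairwise atom-disjoint satisfiable sets is satisfiable. -/
theorem stmt16 {α : Type} :
    (∀ L S : Set (PLTL α), PLTL.Satisfiable L → PLTL.Satisfiable S →
        Disjoint (PLTL.setAtoms L) (PLTL.setAtoms S) → PLTL.Satisfiable (L ∪ S)) ∧
    (∀ (n : ℕ) (F : Fin n → Set (PLTL α)),
        (∀ k, PLTL.Satisfiable (F k)) →
        (∀ j k, j ≠ k → Disjoint (PLTL.setAtoms (F j)) (PLTL.setAtoms (F k))) →
        PLTL.Satisfiable (⋃ k, F k)) := by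
  classical
  have merge : ∀ L S : Set (PLTL α), PLTL.Satisfiable L → PLTL.Satisfiable S →
      Disjoint (PLTL.setAtoms L) (PLTL.setAtoms S) → PLTL.Satisfiable (L ∪ S) := by
    rintro L S ⟨σ, hσ⟩ ⟨τ, hτ⟩ hdisj
    refine ⟨fun i a => if a ∈ PLTL.setAtoms S then τ i a else σ i a, ?_⟩
    rintro φ (hφ | hφ)
    · refine (PLTL.sat_congr φ σ _ ?_ 0).1 (hσ φ hφ)
      intro a ha i
      have haL : a ∈ PLTL.setAtoms L := Set.mem_biUnion hφ ha
      have : a ∉ PLTL.setAtoms S := fun hS => hdisj.ne_of_mem haL hS rfl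
      simp [this]
    · refine (PLTL.sat_congr φ τ _ ?_ 0).1 (hτ φ hφ)
      intro a ha i
      have : a ∈ PLTL.setAtoms S := Set.mem_biUnion hφ ha
      simp [this]
  refine ⟨merge, ?_⟩
  intro n
  induction n with
  | zero =>
    intro F _ _
    refine ⟨fun _ _ => true, ?_⟩
    intro φ hφ
    simp only [Set.mem_iUnion] at hφ
    exact absurd hφ (by simp [Fin.isEmpty])
  | succ n ih =>
    intro F hsat hdisj
    have key : (⋃ k, F k) = (⋃ k : Fin n, F k.castSucc) ∪ F (Fin.last n) := by
      ext φ; simp only [Set.mem_iUnion, Set.mem_union]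
      constructor
      · rintro ⟨k, hk⟩
        induction k using Fin.lastCases with
        | last => exact Or.inr hk
        | cast j => exact Or.inl ⟨j, hk⟩
      · rintro (⟨k, hk⟩ | h)
        · exact ⟨k.castSucc, hk⟩
        · exact ⟨Fin.last n, h⟩
    rw [key]
    apply merge
    · exact ih (fun k => F k.castSucc) (fun k => hsat _)
        (fun j k hjk => hdisj _ _ (by simpa using hjk))
    · exact hsat _
    · rw [Set.disjoint_left]
      intro a ha hb
      simp only [PLTL.setAtoms, Set.mem_iUnion] at ha
      obtain ⟨φ, ⟨k, hk⟩, hφ⟩ := ha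
      have hd := hdisj k.castSucc (Fin.last n) (Fin.castSucc_lt_last k).ne
      exact Set.disjoint_left.1 hd (Set.mem_biUnion hk hφ) hb
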